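/- arXiv:math/0512115 — 2 statements merged into one kernel-verified Lean document; each statement's English description precedes it below -/
import Mathlib

section
/- Let k be a totally real number field of degree d over ℚ and let ℓ be a totally complex quadratic extension of k. Then the kernel of the surjective homomorphism 𝒪_ℓ^× / (𝒪_ℓ^×)^3 → 𝒪_k^× / (𝒪_k^×)^3 induced by the norm map N_{ℓ/k} has cardinality equal to the number of cube roots of unity in ℓ (i.e., #{x ∈ ℓ : x^3 = 1}). -/
/-! By Dirichlet's unit theorem `𝒪_K^× ≅ μ(K) × ℤ^{r_K}`, so `𝒪_K^×/(𝒪_K^×)³` has order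
`|μ₃(K)| · 3^{r_K}`. A totally real field has no cube root of unity other than `1`, and in a
CM extension `ℓ/k` every (real) place of `k` has a single (complex) place above it, so
`r_ℓ = r_k`. Finally, the norm is surjective modulo cubes since `N(u) = u²` for `u ∈ 𝒪_k^×`,
hence the kernel has order `|μ₃(ℓ)| · 3^{r_ℓ} / 3^{r_k} = |μ₃(ℓ)|`. -/

open NumberField

/-- The subgroup of cubes of a commutative group. -/
def cubeSubgroup (G : Type) [CommGroup G] : Subgroup G :=
  (powMonoidHom 3 : G →* G).range

lemma cubeSubgroup_le_comap {G H : Type} [CommGroup G] [CommGroup H] (f : G →* H) :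
    cubeSubgroup G ≤ (cubeSubgroup H).comap f := by
  rintro x ⟨y, rfl⟩
  exact ⟨f y, by show (f y) ^ 3 = f (y ^ 3); rw [map_pow]⟩

/-- The homomorphism `𝒪_ℓ^×/(𝒪_ℓ^×)³ → 𝒪_k^×/(𝒪_k^×)³` induced by the norm map
`N_{ℓ/k}`. -/
noncomputable def normUnitsModCubes (k ℓ : Type) [Field k] [NumberField k]
    [Field ℓ] [NumberField ℓ] [Algebra k ℓ] [FiniteDimensional k ℓ] :
    ((𝓞 ℓ)ˣ ⧸ cubeSubgroup (𝓞 ℓ)ˣ) →* ((𝓞 k)ˣ ⧸ cubeSubgroup (𝓞 k)ˣ) :=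
  QuotientGroup.map _ _ (Units.map (RingOfIntegers.norm k : 𝓞 ℓ →* 𝓞 k))
    (cubeSubgroup_le_comap _)

/-- A number field is totally real if every embedding into `ℂ` has image in `ℝ`. -/
def IsTotallyRealField (K : Type) [Field K] [NumberField K] : Prop :=
  ∀ φ : K →+* ℂ, ∀ x : K, (φ x).im = 0

/-- A number field is totally complex if no embedding into `ℂ` has image in `ℝ`. -/
def IsTotallyComplexField (K : Type) [Field K] [NumberField K] : Prop :=
  ∀ φ : K →+* ℂ, ∃ x : K, (φ x).im ≠ 0

section PowerIndex

variable {G H : Type*} [CommGroup G] [CommGroup H] (n : ℕ)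

lemma Subgroup.index_range_powMonoidHom_prod :
    (powMonoidHom n : G × H →* G × H).range.index =
      (powMonoidHom n : G →* G).range.index * (powMonoidHom n : H →* H).range.index := by
  rw [← Subgroup.index_prod, ← MonoidHom.range_prodMap]
  rfl

lemma Subgroup.index_range_powMonoidHom_congr (e : G ≃* H) :
    (powMonoidHom n : G →* G).range.index = (powMonoidHom n : H →* H).range.index := by
  rw [← Subgroup.index_map_equiv _ e, MulEquiv.map_range_powMonoidHom]

lemma Subgroup.index_range_powMonoidHom_multiplicative (A : Type*) [AddCommGroup A]
    [Module.Free ℤ A] [Module.Finite ℤ A] :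
    (powMonoidHom n : Multiplicative A →* Multiplicative A).range.index =
      n ^ Module.finrank ℤ A :=
  AddSubgroup.index_range_nsmul A n

end PowerIndex

lemma eq_one_of_pow_eq_one_of_odd {K R : Type*} [DivisionRing K] [Semiring R] [LinearOrder R]
    [IsStrictOrderedRing R] [ExistsAddOfLE R] (f : K →+* R) {n : ℕ} (hn : Odd n) {x : K}
    (hx : x ^ n = 1) : x = 1 :=
  f.injective <| by rw [map_one, ← hn.pow_inj, ← map_pow, hx, map_one, one_pow]

namespace NumberField

open InfinitePlace

lemma card_pow_eq_one_of_isTotallyReal (K : Type*) [Field K] [NumberField K] [IsTotallyReal K]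
    {n : ℕ} (hn : Odd n) : Nat.card {x : K // x ^ n = 1} = 1 := by
  let w : InfinitePlace K := Classical.arbitrary _
  exact Nat.card_eq_one_iff_exists.mpr ⟨⟨1, one_pow n⟩, fun x ↦ Subtype.ext <|
    eq_one_of_pow_eq_one_of_odd (embedding_of_isReal (IsTotallyReal.isReal w)) hn x.2⟩

namespace Units

noncomputable def torsionProdEquiv (K : Type*) [Field K] [NumberField K] :
    torsion K × Multiplicative (Fin (rank K) → ℤ) ≃* (𝓞 K)ˣ :=
  MulEquiv.ofBijective
    ((torsion K).subtype.coprod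
      (∏ i, (zpowersHom _ (fundSystem K i)).comp
        (Pi.evalAddMonoidHom (fun _ ↦ ℤ) i).toMultiplicative))
    (by
      rw [Function.bijective_iff_existsUnique]
      intro x
      obtain ⟨⟨ζ, e⟩, hx, huniq⟩ := exist_unique_eq_mul_prod K x
      refine ⟨(ζ, .ofAdd e), by simp [hx], ?_⟩
      rintro ⟨ζ', e'⟩ rfl
      obtain ⟨rfl, rfl⟩ := Prod.ext_iff.mp (huniq (ζ', e'.toAdd) (by simp))
      rfl)

lemma card_ker_powMonoidHom_torsion {K : Type*} [Field K] {n : ℕ} (hn : n ≠ 0) :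
    Nat.card (powMonoidHom n : torsion K →* torsion K).ker = Nat.card {x : K // x ^ n = 1} := by
  refine Nat.card_congr (.ofBijective (fun t ↦ ⟨((t.1 : (𝓞 K)ˣ) : 𝓞 K), ?_⟩) ⟨?_, ?_⟩)
  · have ht : (t.1 : (𝓞 K)ˣ) ^ n = 1 := congrArg Subtype.val t.2
    simpa using congrArg (fun u : (𝓞 K)ˣ ↦ ((u : 𝓞 K) : K)) ht
  · intro t t' h
    exact Subtype.ext <| Subtype.ext <| Units.ext <| RingOfIntegers.ext (Subtype.mk.inj h)
  · rintro ⟨x, hx⟩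
    -- a root of `X ^ n - 1` is an algebraic integer, and then a unit of finite order
    have hint : IsIntegral ℤ x := .of_pow (Nat.pos_of_ne_zero hn) (hx ▸ isIntegral_one)
    have ha : (⟨x, hint⟩ : 𝓞 K) ^ n = 1 := RingOfIntegers.ext hx
    let u := Units.ofPowEqOne _ n ha hn
    have hu : u ∈ torsion K :=
      isOfFinOrder_iff_pow_eq_one.mpr ⟨n, Nat.pos_of_ne_zero hn, Units.pow_ofPowEqOne ha hn⟩
    exact ⟨⟨⟨u, hu⟩, Subtype.ext (Units.pow_ofPowEqOne ha hn)⟩, rfl⟩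

lemma index_range_powMonoidHom (K : Type*) [Field K] [NumberField K] {n : ℕ} (hn : n ≠ 0) :
    (powMonoidHom n : (𝓞 K)ˣ →* (𝓞 K)ˣ).range.index =
      Nat.card {x : K // x ^ n = 1} * n ^ rank K := by
  rw [← Subgroup.index_range_powMonoidHom_congr n (torsionProdEquiv K),
    Subgroup.index_range_powMonoidHom_prod, Subgroup.index_range,
    card_ker_powMonoidHom_torsion hn, Subgroup.index_range_powMonoidHom_multiplicative,
    Module.finrank_fin_fun]

lemma rank_eq_rank_of_finrank_eq_two (k ℓ : Type*) [Field k] [NumberField k] [Field ℓ]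
    [NumberField ℓ] [Algebra k ℓ] [IsTotallyReal k] [IsTotallyComplex ℓ]
    (h : Module.finrank k ℓ = 2) : rank ℓ = rank k := by
  have hk := IsTotallyReal.finrank k
  have hℓ := IsTotallyComplex.finrank ℓ
  have htower := h ▸ Module.finrank_mul_finrank ℚ k ℓ
  rw [rank, rank, card_eq_nrRealPlaces_add_nrComplexPlaces,
    card_eq_nrRealPlaces_add_nrComplexPlaces, IsTotallyReal.nrComplexPlaces_eq_zero (K := k),
    IsTotallyComplex.nrRealPlaces_eq_zero]
  omega

end Units

end NumberField

lemma IsTotallyRealField.isTotallyReal {K : Type} [Field K] [NumberField K]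
    (h : IsTotallyRealField K) : IsTotallyReal K :=
  ⟨fun _ ↦ InfinitePlace.isReal_iff.mpr <| ComplexEmbedding.isReal_iff.mpr <|
    RingHom.ext fun x ↦ Complex.conj_eq_iff_im.mpr (h _ x)⟩

lemma IsTotallyComplexField.isTotallyComplex {K : Type} [Field K] [NumberField K]
    (h : IsTotallyComplexField K) : IsTotallyComplex K :=
  ⟨fun w ↦ InfinitePlace.not_isReal_iff_isComplex.mp fun hw ↦ by
    obtain ⟨x, hx⟩ := h w.embedding
    exact hx <| Complex.conj_eq_iff_im.mp <|
      congrArg (· x) (ComplexEmbedding.isReal_iff.mp (InfinitePlace.isReal_iff.mp hw))⟩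

lemma normUnitsModCubes_surjective (k ℓ : Type) [Field k] [NumberField k] [Field ℓ]
    [NumberField ℓ] [Algebra k ℓ] [FiniteDimensional k ℓ] (hdeg : Module.finrank k ℓ = 2) :
    Function.Surjective (normUnitsModCubes k ℓ) := by
  rintro ⟨u⟩
  -- `N(u⁻¹) = u⁻²`, which is `u` times the cube `u⁻³`
  refine ⟨QuotientGroup.mk (Units.map (algebraMap (𝓞 k) (𝓞 ℓ) : 𝓞 k →* 𝓞 ℓ) u)⁻¹, ?_⟩
  have hnorm : Units.map (RingOfIntegers.norm k : 𝓞 ℓ →* 𝓞 k)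
      (Units.map (algebraMap (𝓞 k) (𝓞 ℓ) : 𝓞 k →* 𝓞 ℓ) u) = u ^ 2 :=
    Units.ext <| by simpa [hdeg] using RingOfIntegers.norm_algebraMap (L := ℓ) k u
  refine (QuotientGroup.eq (s := cubeSubgroup (𝓞 k)ˣ)).mpr ⟨u, ?_⟩
  simp only [powMonoidHom_apply, map_inv, hnorm]
  group

/-- For `k` totally real and `ℓ` a totally complex quadratic extension of `k`, the kernel
of the (surjective) homomorphism `𝒪_ℓ^×/(𝒪_ℓ^×)³ → 𝒪_k^×/(𝒪_k^×)³` induced by the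
norm map has cardinality equal to the number of cube roots of unity in `ℓ`. -/
theorem card_ker_normUnitsModCubes (k ℓ : Type) [Field k] [NumberField k]
    [Field ℓ] [NumberField ℓ] [Algebra k ℓ] [FiniteDimensional k ℓ]
    (hdeg : Module.finrank k ℓ = 2)
    (hk : IsTotallyRealField k) (hℓ : IsTotallyComplexField ℓ) :
    Nat.card (MonoidHom.ker (normUnitsModCubes k ℓ)) =
      Nat.card {x : ℓ // x ^ 3 = 1} := by
  have := hk.isTotallyReal
  have := hℓ.isTotallyComplex
  have hcard := Subgroup.card_mul_index (normUnitsModCubes k ℓ).ker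
  rw [Subgroup.index_ker, MonoidHom.range_eq_top.mpr (normUnitsModCubes_surjective k ℓ hdeg),
    Subgroup.card_top] at hcard
  change _ * (powMonoidHom 3 : (𝓞 k)ˣ →* _).range.index =
    (powMonoidHom 3 : (𝓞 ℓ)ˣ →* _).range.index at hcard
  rw [Units.index_range_powMonoidHom k three_ne_zero,
    Units.index_range_powMonoidHom ℓ three_ne_zero, card_pow_eq_one_of_isTotallyReal k (by decide),
    Units.rank_eq_rank_of_finrank_eq_two k ℓ hdeg, one_mul] at hcard
  exact Nat.eq_of_mul_eq_mul_right (by positivity) hcard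
end

section
/- Every root in ℚ₂ of the polynomial X² - 3X + 8 is a cube in ℚ₂: if x ∈ ℚ₂ satisfies x² - 3x + 8 = 0, then there exists y ∈ ℚ₂ with y³ = x. -/
/-!
The roots `x` of `X² - 3X + 8` satisfy `x (x - 3) = -8`, so by the ultrametric inequality either
`‖x‖ = 1` or `x / 2³` is a unit. It therefore suffices that every 2-adic unit is a cube. A unit
`a` of `ℤ₂` is `≡ 1 mod 2`, and Hensel's lemma lifts the root `1` of `X³ - a` modulo 2, since the
derivative `3` there is a unit.
-/

open Polynomial

theorem norm_le_one_of_sq_eq_mul_add {K : Type*} [NormedDivisionRing K] [IsUltrametricDist K]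
    {x b c : K} (hb : ‖b‖ ≤ 1) (hc : ‖c‖ ≤ 1) (h : x ^ 2 = b * x + c) : ‖x‖ ≤ 1 := by
  by_contra! hx
  have : ‖x‖ ^ 2 ≤ ‖x‖ :=
    calc ‖x‖ ^ 2 = ‖b * x + c‖ := by rw [← norm_pow, h]
      _ ≤ max ‖b * x‖ ‖c‖ := IsUltrametricDist.norm_add_le_max _ _
      _ ≤ ‖x‖ := by
        rw [norm_mul]
        exact max_le (mul_le_of_le_one_left (norm_nonneg x) hb) (hc.trans hx.le)
  nlinarith

theorem norm_eq_one_or_eq_norm_of_sq_sub_mul_add_eq_zero {K : Type*} [NormedField K]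
    [IsUltrametricDist K] {x b c : K} (hb : ‖b‖ = 1) (hc : ‖c‖ ≤ 1)
    (h : x ^ 2 - b * x + c = 0) : ‖x‖ = 1 ∨ ‖x‖ = ‖c‖ := by
  have hx : ‖x‖ ≤ 1 := norm_le_one_of_sq_eq_mul_add hb.le (norm_neg c ▸ hc)
    (by linear_combination h)
  refine hx.eq_or_lt.imp id fun hlt => ?_
  have hxb : ‖x - b‖ = 1 := by
    rw [sub_eq_add_neg, IsUltrametricDist.norm_add_eq_max_of_norm_ne_norm (by simp [hb, hlt.ne]),
      norm_neg, hb, max_eq_right hlt.le]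
  calc ‖x‖ = ‖x * (x - b)‖ := by rw [norm_mul, hxb, mul_one]
    _ = ‖c‖ := by rw [← norm_neg c]; congr 1; linear_combination h

theorem PadicInt.exists_pow_eq_of_norm_sub_one_lt_one {p : ℕ} [Fact p.Prime] {n : ℕ}
    (hn : p.Coprime n) {a : ℤ_[p]} (ha : ‖a - 1‖ < 1) : ∃ z : ℤ_[p], z ^ n = a := by
  have hderiv : ‖(X ^ n - C a).derivative.aeval (1 : ℤ_[p])‖ = 1 := by
    simpa [derivative_X_pow] using PadicInt.norm_natCast_eq_one_iff.mpr hn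
  have hval : ‖(X ^ n - C a).aeval (1 : ℤ_[p])‖ <
      ‖(X ^ n - C a).derivative.aeval (1 : ℤ_[p])‖ ^ 2 := by
    rw [hderiv, one_pow, ← norm_neg]; simpa using ha
  obtain ⟨z, hz, -⟩ := hensels_lemma hval
  exact ⟨z, by simpa [sub_eq_zero] using hz⟩

theorem PadicInt.norm_sub_one_lt_one_of_isUnit {a : ℤ_[2]} (ha : IsUnit a) : ‖a - 1‖ < 1 := by
  obtain ⟨n, hn, hmem⟩ := PadicInt.exists_mem_range a
  rw [← PadicInt.mem_nonunits]
  interval_cases n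
  · exact absurd ha (by simpa using hmem)
  · simpa using hmem

theorem Padic.exists_pow_eq_of_odd_of_norm_eq_one {n : ℕ} (hn : Odd n) {x : ℚ_[2]}
    (hx : ‖x‖ = 1) : ∃ y : ℚ_[2], y ^ n = x := by
  obtain ⟨z, hz⟩ := PadicInt.exists_pow_eq_of_norm_sub_one_lt_one (Nat.coprime_two_left.mpr hn)
    (PadicInt.norm_sub_one_lt_one_of_isUnit (PadicInt.isUnit_iff (z := ⟨x, hx.le⟩) |>.mpr hx))
  exact ⟨z, by rw [← PadicInt.coe_pow, hz]⟩

/-- Every root in `ℚ₂` of `X² - 3X + 8` is a cube in `ℚ₂`. -/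
theorem root_of_quadratic_is_cube_in_Q2 (x : ℚ_[2]) (hx : x ^ 2 - 3 * x + 8 = 0) :
    ∃ y : ℚ_[2], y ^ 3 = x := by
  have h3 : ‖(3 : ℚ_[2])‖ = 1 := by exact_mod_cast Padic.norm_natCast_eq_one_iff.mpr (by norm_num)
  have h8 : ‖(8 : ℚ_[2])‖ ≤ 1 := by exact_mod_cast Padic.norm_int_le_one (p := 2) 8
  rcases norm_eq_one_or_eq_norm_of_sq_sub_mul_add_eq_zero h3 h8 hx with hunit | hnorm
  · exact Padic.exists_pow_eq_of_odd_of_norm_eq_one (by decide) hunit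
  · obtain ⟨y, hy⟩ := Padic.exists_pow_eq_of_odd_of_norm_eq_one (n := 3) (by decide) (x := x / 8)
      (by rw [norm_div, hnorm, div_self (by simp)])
    exact ⟨2 * y, by rw [mul_pow, hy]; ring⟩
end
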